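/- Let A be an algebra in the variety R. Then V_{x,y}(L_z L_t + V_{t,z}) = 0; that is, for all u,x,y,z,t in A, t(z((xu)y)) + (t((xu)y))z = 0. -/
import Mathlib


theorem stmt {F A : Type*} [Field F] [NonUnitalNonAssocRing A] [Module F A]
    [SMulCommClass F A A] [IsScalarTower F A A]
    (h1 : ∀ a b c : A, (a * b - b * a) * c - c * (a * b - b * a) = 0)
    (h2 : ∀ a b : A, (a * b) * a = 0)
    (h3 : ∀ a b c d : A, (a * b) * (c * d) = 0) :
    ∀ u x y z t : A, t * (z * ((x * u) * y)) + (t * ((x * u) * y)) * z = 0 := by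
  -- linearization of h2:  (a*b)*c + (c*b)*a = 0
  have star : ∀ a b c : A, (a * b) * c + (c * b) * a = 0 := by
    intro a b c
    have h := h2 (a + c) b
    rw [add_mul, add_mul, mul_add, mul_add, h2 a b, h2 c b, zero_add, add_zero] at h
    exact h
  -- ((a*b)*c)*d = 0
  have dag : ∀ a b c d : A, ((a * b) * c) * d = 0 := by
    intro a b c d
    have h := star (a * b) c d
    rw [h3 d c a b, add_zero] at h
    exact h
  intro u x y z t
  set v := (x * u) * y with hv
  have hvz : v * z = 0 := dag x u y z
  have hc := h1 z v t
  rw [hvz, sub_zero, sub_eq_zero] at hc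
  rw [← hc]
  exact star z v t
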